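/- For every q ∈ (0,1), every real a > 0, and every m ∈ ℕ (m ≥ 0): Σ over all (m+1)-tuples of natural numbers 0 ≤ n_m ≤ n_{m−1} ≤ … ≤ n_0 < ∞ of q^{n_0+…+n_{m−1}+n_m} / [ (q^{n_m+a};q)_2 (q^{n_{m−1}+a+2};q)_2 ⋯ (q^{n_1+a+2m−2};q)_2 (q^{n_0+a+2m};q)_1 ] = (1 / ((q;q)_m (q^a;q)_m)) · Σ_{j=0}^∞ q^{(m+a)j} / (1 − q^{j+m+1}), with all series converging absolutely (here q^a denotes the real power). -/

import Mathlib

open scoped BigOperators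

/-- The q-Pochhammer symbol `(x;q)_r = ∏_{i=0}^{r−1} (1 − q^i x)` (real version). -/
noncomputable def qPR (q x : ℝ) (r : ℕ) : ℝ := ∏ i ∈ Finset.range r, (1 - q ^ i * x)

/-- The summand of the left-hand side of Statement 12, for an antitone tuple
`n_m ≤ n_{m−1} ≤ … ≤ n_0` (here `n i` is `n_i`):
`q^{n_0+…+n_m} / [(q^{n_m+a};q)_2 (q^{n_{m−1}+a+2};q)_2 ⋯ (q^{n_1+a+2m−2};q)_2 (q^{n_0+a+2m};q)_1]`. -/
noncomputable def lhsTerm12 (q a : ℝ) (m : ℕ) (n : Fin (m + 1) → ℕ) : ℝ :=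
  q ^ (∑ i : Fin (m + 1), n i) /
    (qPR q (q ^ ((n 0 : ℝ) + a + (2 * m : ℕ))) 1 *
      ∏ i : Fin m, qPR q (q ^ ((n i.succ : ℝ) + a + ((2 * (m - 1 - (i : ℕ)) : ℕ) : ℝ))) 2)

/-!
Write an antitone tuple as `Fin.cons N t`. For fixed `N` the sum over the finitely many tails
`N ≥ t 0 ≥ ⋯ ≥ t (m-1)` is computed by induction on `m`: each step is a telescoping sum, and the
result is `(q^{N+1};q)_m / ((q;q)_m (b;q)_m (q^{N+m} b;q)_m)` with `b = q^a`. The remaining sum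
over `N` and the right-hand side are then the two iterated sums of one nonnegative double series,
both obtained by expanding with `∑ₙ zⁿ (q^{n+1};q)_m = (q;q)_m / (z;q)_{m+1}`.
-/

lemma qPR_zero (q x : ℝ) : qPR q x 0 = 1 := by simp [qPR]

lemma qPR_one (q x : ℝ) : qPR q x 1 = 1 - x := by simp [qPR]

lemma qPR_succ (q x : ℝ) (r : ℕ) : qPR q x (r + 1) = qPR q x r * (1 - q ^ r * x) :=
  Finset.prod_range_succ _ r

lemma qPR_succ' (q x : ℝ) (r : ℕ) : qPR q x (r + 1) = (1 - x) * qPR q (q * x) r := by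
  simp only [qPR, Finset.prod_range_succ', pow_succ, pow_zero, one_mul, mul_assoc]
  ring

lemma qPR_add (q x : ℝ) (r s : ℕ) : qPR q x (r + s) = qPR q x r * qPR q (q ^ r * x) s := by
  rw [qPR, qPR, qPR, Finset.prod_range_add]
  congr 1
  refine Finset.prod_congr rfl fun i _ => ?_
  ring

lemma qPR_div_qPR_q_mul_sub (q u x : ℝ) (m : ℕ) (h : qPR q (u * x) (m + 2) ≠ 0) :
    qPR q (q * u) (m + 1) / qPR q (q * u * x) (m + 1) - qPR q u (m + 1) / qPR q (u * x) (m + 1)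
      = (1 - q ^ (m + 1)) * (1 - x) * (u * qPR q (q * u) m / qPR q (u * x) (m + 2)) := by
  rw [qPR_succ' q (u * x) (m + 1), qPR_succ] at h
  rw [qPR_succ' q (u * x) (m + 1), qPR_succ' q u m, qPR_succ' q (u * x) m, qPR_succ q (q * u) m,
    mul_assoc q u x, qPR_succ q (q * (u * x)) m]
  obtain ⟨h1, h2, h3⟩ : 1 - u * x ≠ 0 ∧ qPR q (q * (u * x)) m ≠ 0 ∧
      1 - q ^ m * (q * (u * x)) ≠ 0 := by
    simpa only [mul_ne_zero_iff, and_assoc] using h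
  rw [div_sub_div _ _ (mul_ne_zero h2 h3) (mul_ne_zero h1 h2), mul_div_assoc',
    div_eq_div_iff (mul_ne_zero (mul_ne_zero h2 h3) (mul_ne_zero h1 h2)) h]
  ring

section

variable {q x : ℝ}

lemma pow_mul_lt_one (hq0 : 0 ≤ q) (hq1 : q ≤ 1) (hx : x < 1) (k : ℕ) : q ^ k * x < 1 := by
  have hk0 : 0 ≤ q ^ k := pow_nonneg hq0 k
  have hk1 : q ^ k ≤ 1 := pow_le_one₀ hq0 hq1
  rcases le_total 0 x with h | h
  · exact (mul_le_of_le_one_left h hk1).trans_lt hx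
  · exact (mul_nonpos_of_nonneg_of_nonpos hk0 h).trans_lt one_pos

lemma qPR_pos (hq0 : 0 ≤ q) (hq1 : q ≤ 1) (hx : x < 1) (r : ℕ) : 0 < qPR q x r :=
  Finset.prod_pos fun i _ => sub_pos.2 (pow_mul_lt_one hq0 hq1 hx i)

lemma hasSum_pow_mul_qPR (hq0 : 0 ≤ q) (hq1 : q < 1) (m : ℕ) {z : ℝ} (hz0 : 0 ≤ z)
    (hz1 : z < 1) :
    HasSum (fun n : ℕ => z ^ n * qPR q (q ^ (n + 1)) m) (qPR q q m / qPR q z (m + 1)) := by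
  induction m generalizing z with
  | zero => simpa [qPR_zero, qPR_one] using hasSum_geometric_of_lt_one hz0 hz1
  | succ m ih =>
    have hqz1 : q * z < 1 := pow_one q ▸ pow_mul_lt_one hq0 hq1.le hz1 1
    have hsplit : ∀ n : ℕ, z ^ n * qPR q (q ^ (n + 1)) (m + 1)
        = z ^ n * qPR q (q ^ (n + 1)) m - q ^ (m + 1) * ((q * z) ^ n * qPR q (q ^ (n + 1)) m) := by
      intro n
      rw [qPR_succ, mul_pow]
      ring
    have hC : qPR q (q * z) m ≠ 0 := (qPR_pos hq0 hq1.le hqz1 m).ne'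
    have h1z : 1 - z ≠ 0 := (sub_pos.2 hz1).ne'
    have h1qz : 1 - q ^ m * (q * z) ≠ 0 := (sub_pos.2 (pow_mul_lt_one hq0 hq1.le hqz1 m)).ne'
    have hval : qPR q q m / qPR q z (m + 1) - q ^ (m + 1) * (qPR q q m / qPR q (q * z) (m + 1))
        = qPR q q (m + 1) / qPR q z (m + 1 + 1) := by
      rw [qPR_succ' q z (m + 1), qPR_succ q (q * z) m, qPR_succ' q z m, qPR_succ q q m,
        mul_div_assoc', div_sub_div _ _ (mul_ne_zero h1z hC) (mul_ne_zero hC h1qz),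
        div_eq_div_iff (mul_ne_zero (mul_ne_zero h1z hC) (mul_ne_zero hC h1qz))
          (mul_ne_zero h1z (mul_ne_zero hC h1qz))]
      ring
    simpa only [← hsplit, hval] using
      (ih hz0 hz1).sub ((ih (mul_nonneg hq0 hz0) hqz1).mul_left (q ^ (m + 1)))

lemma summable_pow_div_one_sub_pow (hq0 : 0 ≤ q) (hq1 : q < 1) (hx0 : 0 ≤ x)
    (hx1 : x < 1) (k : ℕ) : Summable (fun j : ℕ => x ^ j / (1 - q ^ (j + k + 1))) := by
  refine ((summable_geometric_of_lt_one hx0 hx1).div_const (1 - q)).of_nonneg_of_le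
    (fun j => ?_) (fun j => ?_)
  · have := pow_lt_one₀ hq0 hq1 (Nat.succ_ne_zero (j + k))
    exact div_nonneg (pow_nonneg hx0 j) (sub_pos.2 this).le
  · have hle : q ^ (j + k + 1) ≤ q := pow_le_of_le_one hq0 hq1.le (Nat.succ_ne_zero _)
    exact div_le_div_of_nonneg_left (pow_nonneg hx0 j) (sub_pos.2 hq1) (by linarith)

lemma hasSum_pow_mul_qPR_div_qPR (hq0 : 0 ≤ q) (hq1 : q < 1) (m : ℕ) (hx0 : 0 ≤ x)
    (hx1 : x < 1) :
    HasSum (fun N : ℕ => q ^ N * qPR q (q ^ (N + 1)) m / qPR q (q ^ N * x) (m + 1))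
      (∑' j : ℕ, x ^ j / (1 - q ^ (j + m + 1))) := by
  have hqpow : ∀ n : ℕ, q ^ (n + 1) < 1 := fun n => pow_lt_one₀ hq0 hq1 n.succ_ne_zero
  have hP : 0 < qPR q q m := qPR_pos hq0 hq1.le hq1 m
  have hg : ∀ n : ℕ, 0 < qPR q (q ^ (n + 1)) m := fun n => qPR_pos hq0 hq1.le (hqpow n) m
  -- expanding both `1 / (1 - q ^ (j + m + 1))` and `1 / (q ^ N * x; q)_(m+1)` by
  -- `hasSum_pow_mul_qPR` gives this same double series
  let h : ℕ × ℕ → ℝ := fun p => x ^ p.1 * qPR q (q ^ (p.1 + 1)) m / qPR q q m *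
    ((q ^ (p.1 + 1)) ^ p.2 * qPR q (q ^ (p.2 + 1)) m)
  have hcol : ∀ j, HasSum (fun N => h (j, N)) (x ^ j / (1 - q ^ (j + m + 1))) := by
    intro j
    have h1 : 1 - q ^ (j + m + 1) ≠ 0 := (sub_pos.2 (hqpow (j + m))).ne'
    have hval : x ^ j / (1 - q ^ (j + m + 1)) = x ^ j * qPR q (q ^ (j + 1)) m / qPR q q m *
        (qPR q q m / qPR q (q ^ (j + 1)) (m + 1)) := by
      rw [qPR_succ, ← pow_add, show m + (j + 1) = j + m + 1 by ring]
      field_simp [(hg j).ne']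
    rw [hval]
    exact (hasSum_pow_mul_qPR hq0 hq1 m (pow_nonneg hq0 (j + 1)) (hqpow j)).mul_left _
  have hrow : ∀ N, HasSum (fun j => h (j, N))
      (q ^ N * qPR q (q ^ (N + 1)) m / qPR q (q ^ N * x) (m + 1)) := by
    intro N
    have hNx : q ^ N * x < 1 := pow_mul_lt_one hq0 hq1.le hx1 N
    have hval : q ^ N * qPR q (q ^ (N + 1)) m / qPR q (q ^ N * x) (m + 1) =
        q ^ N * qPR q (q ^ (N + 1)) m / qPR q q m * (qPR q q m / qPR q (q ^ N * x) (m + 1)) := by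
      field_simp
    rw [hval]
    refine ((hasSum_pow_mul_qPR hq0 hq1 m (mul_nonneg (pow_nonneg hq0 N) hx0) hNx).mul_left
      _).congr_fun fun j => ?_
    simp only [h]
    ring
  have hnonneg : 0 ≤ h := fun p => by
    have := hg p.1
    have := hg p.2
    positivity
  have hsum : Summable h := (summable_prod_of_nonneg hnonneg).2
    ⟨fun j => (hcol j).summable, by
      simpa only [(hcol _).tsum_eq] using summable_pow_div_one_sub_pow hq0 hq1 hx0 hx1 m⟩
  have htot : HasSum h (∑' j : ℕ, x ^ j / (1 - q ^ (j + m + 1))) := by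
    rw [(hsum.hasSum.prod_fiberwise hcol).tsum_eq]
    exact hsum.hasSum
  exact ((Equiv.prodComm ℕ ℕ).hasSum_iff.2 htot).prod_fiberwise hrow

lemma sum_range_pow_mul_qPR_div_qPR (hq0 : 0 ≤ q) (hq1 : q < 1) (hx : x < 1)
    (m K : ℕ) :
    ∑ M ∈ Finset.range K, q ^ M * qPR q (q ^ (M + 1)) m / qPR q (q ^ M * x) (m + 2)
      = qPR q (q ^ K) (m + 1) / qPR q (q ^ K * x) (m + 1) / ((1 - q ^ (m + 1)) * (1 - x)) := by
  have hc : (1 - q ^ (m + 1)) * (1 - x) ≠ 0 :=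
    mul_ne_zero (sub_pos.2 (pow_lt_one₀ hq0 hq1 m.succ_ne_zero)).ne' (sub_pos.2 hx).ne'
  induction K with
  | zero => simp [qPR_succ']
  | succ K ih =>
    have hstep := qPR_div_qPR_q_mul_sub q (q ^ K) x m
      (qPR_pos hq0 hq1.le (pow_mul_lt_one hq0 hq1.le hx K) _).ne'
    rw [← pow_succ'] at hstep
    rw [Finset.sum_range_succ, ih, eq_div_iff hc, add_mul, div_mul_cancel₀ _ hc]
    linear_combination -hstep

end

lemma antitone_finCons_iff {α : Type*} [Preorder α] {n : ℕ} {f : Fin n → α} {a : α} :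
    Antitone (Fin.cons a f : Fin (n + 1) → α) ↔ (∀ i, f i ≤ a) ∧ Antitone f := by
  simpa only [antitone_iff_forall_lt, Relator.LiftFun, ge_iff_le] using
    Fin.liftFun_cons (α := α) (· ≥ ·) (f := f) (a := a)

def AntitoneTail (m N : ℕ) : Type :=
  {t : Fin m → ℕ // Antitone (Fin.cons N t : Fin (m + 1) → ℕ)}

namespace AntitoneTail

instance (m N : ℕ) : Finite (AntitoneTail m N) :=
  Finite.of_injective (fun t i => (⟨t.1 i, Nat.lt_succ_of_le
    ((antitone_finCons_iff.1 t.2).1 i)⟩ : Fin (N + 1)))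
    fun _ _ h => Subtype.ext <| funext fun i => congrArg Fin.val (congrFun h i)

instance (N : ℕ) : Unique (AntitoneTail 0 N) where
  default := ⟨finZeroElim, antitone_finCons_iff.2 ⟨finZeroElim, fun i => i.elim0⟩⟩
  uniq _ := Subtype.ext <| funext finZeroElim

def succEquiv (m N : ℕ) : AntitoneTail (m + 1) N ≃ Σ M : Fin (N + 1), AntitoneTail m M where
  toFun t := ⟨⟨t.1 0, Nat.lt_succ_of_le ((antitone_finCons_iff.1 t.2).1 0)⟩,
    ⟨Fin.tail t.1, by rw [Fin.cons_self_tail]; exact (antitone_finCons_iff.1 t.2).2⟩⟩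
  invFun p := ⟨Fin.cons p.1 p.2.1, by
    obtain ⟨hle, hanti⟩ := antitone_finCons_iff.1 p.2.2
    refine antitone_finCons_iff.2 ⟨Fin.cases (Nat.le_of_lt_succ p.1.2) fun i => ?_, p.2.2⟩
    exact (hle i).trans (Nat.le_of_lt_succ p.1.2)⟩
  left_inv t := Subtype.ext (Fin.cons_self_tail t.1)
  right_inv _ := rfl

end AntitoneTail

def antitoneEquivSigma (m : ℕ) :
    {n : Fin (m + 1) → ℕ // Antitone n} ≃ Σ N : ℕ, AntitoneTail m N where
  toFun n := ⟨n.1 0, ⟨Fin.tail n.1, by rw [Fin.cons_self_tail]; exact n.2⟩⟩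
  invFun p := ⟨Fin.cons p.1 p.2.1, p.2.2⟩
  left_inv n := Subtype.ext (Fin.cons_self_tail n.1)
  right_inv _ := rfl

noncomputable def tailTerm (q b : ℝ) (m : ℕ) (t : Fin m → ℕ) : ℝ :=
  q ^ (∑ i, t i) / ∏ i : Fin m, qPR q (q ^ (t i + 2 * (m - 1 - (i : ℕ))) * b) 2

lemma tailTerm_cons (q b : ℝ) (m M : ℕ) (s : Fin m → ℕ) :
    tailTerm q b (m + 1) (Fin.cons M s)
      = q ^ M / qPR q (q ^ (M + 2 * m) * b) 2 * tailTerm q b m s := by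
  rw [tailTerm, tailTerm, Fin.sum_cons, Fin.prod_univ_succ, pow_add, div_mul_div_comm]
  simp only [Fin.cons_zero, Fin.cons_succ, Fin.val_zero, Fin.val_succ]
  congr 4
  funext i
  rw [show m + 1 - 1 - ((i : ℕ) + 1) = m - 1 - i by omega]

lemma rpow_natCast_add_add {q : ℝ} (hq : 0 < q) (k l : ℕ) (a : ℝ) :
    q ^ ((k : ℝ) + a + (l : ℝ)) = q ^ (k + l) * q ^ a := by
  rw [add_right_comm, ← Nat.cast_add, Real.rpow_add hq, Real.rpow_natCast]

lemma lhsTerm12_cons {q : ℝ} (hq : 0 < q) (a : ℝ) (m N : ℕ) (t : Fin m → ℕ) :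
    lhsTerm12 q a m (Fin.cons N t)
      = q ^ N / qPR q (q ^ (N + 2 * m) * q ^ a) 1 * tailTerm q (q ^ a) m t := by
  simp only [lhsTerm12, tailTerm, Fin.sum_cons, Fin.cons_zero, Fin.cons_succ,
    rpow_natCast_add_add hq, pow_add, div_mul_div_comm]

lemma tsum_tailTerm_succ (q b : ℝ) (m N : ℕ) :
    ∑' t : AntitoneTail (m + 1) N, tailTerm q b (m + 1) t.1
      = ∑ M ∈ Finset.range (N + 1),
          q ^ M / qPR q (q ^ (M + 2 * m) * b) 2 * ∑' s : AntitoneTail m M, tailTerm q b m s.1 := by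
  rw [← (AntitoneTail.succEquiv m N).symm.tsum_eq, Summable.of_finite.tsum_sigma, tsum_fintype,
    ← Fin.sum_univ_eq_sum_range (fun M => q ^ M / qPR q (q ^ (M + 2 * m) * b) 2 *
      ∑' s : AntitoneTail m M, tailTerm q b m s.1)]
  refine Finset.sum_congr rfl fun M _ => ?_
  rw [← tsum_mul_left]
  exact tsum_congr fun s => tailTerm_cons q b m M s.1

lemma pow_div_qPR_mul_div (q b : ℝ) (m N r : ℕ) :
    q ^ N / qPR q (q ^ (N + 2 * m) * b) r *
        (qPR q (q ^ (N + 1)) m / (qPR q q m * qPR q b m * qPR q (q ^ (N + m) * b) m))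
      = 1 / (qPR q q m * qPR q b m) *
          (q ^ N * qPR q (q ^ (N + 1)) m / qPR q (q ^ N * (q ^ m * b)) (m + r)) := by
  have h1 : q ^ N * (q ^ m * b) = q ^ (N + m) * b := by ring
  have h2 : q ^ m * (q ^ (N + m) * b) = q ^ (N + 2 * m) * b := by ring
  rw [qPR_add, h1, h2]
  ring

lemma tsum_tailTerm {q b : ℝ} (hq0 : 0 ≤ q) (hq1 : q < 1) (hb : b < 1) (m N : ℕ) :
    ∑' t : AntitoneTail m N, tailTerm q b m t.1
      = qPR q (q ^ (N + 1)) m / (qPR q q m * qPR q b m * qPR q (q ^ (N + m) * b) m) := by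
  induction m generalizing N with
  | zero => simp [tailTerm, qPR_zero]
  | succ m ih =>
    have hx : q ^ m * b < 1 := pow_mul_lt_one hq0 hq1.le hb m
    simp only [tsum_tailTerm_succ, ih, pow_div_qPR_mul_div, ← Finset.mul_sum,
      sum_range_pow_mul_qPR_div_qPR hq0 hq1 hx]
    rw [qPR_succ q q m, qPR_succ q b m, pow_succ q m,
      show q ^ (N + 1) * (q ^ m * b) = q ^ (N + (m + 1)) * b by ring]
    simp only [div_eq_mul_inv, mul_inv]
    ring

lemma lhsTerm12_nonneg {q : ℝ} (hq0 : 0 < q) (hq1 : q < 1) {a : ℝ} (ha : 0 < a) (m : ℕ)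
    (n : Fin (m + 1) → ℕ) : 0 ≤ lhsTerm12 q a m n := by
  have hpos : ∀ (y : ℝ) (r : ℕ), 0 < y → 0 < qPR q (q ^ y) r := fun y r hy =>
    qPR_pos hq0.le hq1.le (Real.rpow_lt_one hq0.le hq1 hy) r
  exact div_nonneg (pow_nonneg hq0.le _) (mul_pos (hpos _ 1 (by positivity))
    (Finset.prod_pos fun _ _ => hpos _ 2 (by positivity))).le

lemma hasSum_lhsTerm12 {q : ℝ} (hq0 : 0 < q) (hq1 : q < 1) {a : ℝ} (ha : 0 < a) (m : ℕ) :
    HasSum (fun n : {n : Fin (m + 1) → ℕ // Antitone n} => lhsTerm12 q a m n.1)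
      (1 / (qPR q q m * qPR q (q ^ a) m) *
        ∑' j : ℕ, (q ^ m * q ^ a) ^ j / (1 - q ^ (j + m + 1))) := by
  have hb : q ^ a < 1 := Real.rpow_lt_one hq0.le hq1 ha
  have hx0 : 0 ≤ q ^ m * q ^ a := by positivity
  have hx1 : q ^ m * q ^ a < 1 := pow_mul_lt_one hq0.le hq1.le hb m
  set F : ℕ → ℝ := fun N => 1 / (qPR q q m * qPR q (q ^ a) m) *
    (q ^ N * qPR q (q ^ (N + 1)) m / qPR q (q ^ N * (q ^ m * q ^ a)) (m + 1))
  have hF : HasSum F _ :=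
    (hasSum_pow_mul_qPR_div_qPR hq0.le hq1 m hx0 hx1).mul_left (1 / (qPR q q m * qPR q (q ^ a) m))
  let f : (Σ N : ℕ, AntitoneTail m N) → ℝ := fun p => lhsTerm12 q a m (Fin.cons p.1 p.2.1)
  have hfiber : ∀ N, HasSum (fun t => f ⟨N, t⟩) (F N) := by
    intro N
    have hsum : ∑' t, f ⟨N, t⟩ = F N := by
      simp only [f, lhsTerm12_cons hq0, tsum_mul_left, tsum_tailTerm hq0.le hq1 hb,
        pow_div_qPR_mul_div, F]
    exact hsum ▸ (Summable.of_finite : Summable fun t => f ⟨N, t⟩).hasSum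
  have hf : Summable f := (summable_sigma_of_nonneg fun p => lhsTerm12_nonneg hq0 hq1 ha m _).2
    ⟨fun N => (hfiber N).summable, hF.summable.congr fun N => ((hfiber N).tsum_eq).symm⟩
  rw [hF.unique (hf.hasSum.sigma hfiber)]
  exact (antitoneEquivSigma m).symm.hasSum_iff.1 hf.hasSum

/-- For `q ∈ (0,1)`, `a > 0`, `m ≥ 0`:
`Σ_{0 ≤ n_m ≤ … ≤ n_0} q^{n_0+…+n_m}/[(q^{n_m+a};q)_2 ⋯ (q^{n_1+a+2m−2};q)_2 (q^{n_0+a+2m};q)_1]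
  = (1/((q;q)_m (q^a;q)_m)) Σ_{j=0}^∞ q^{(m+a)j}/(1 − q^{j+m+1})`,
with all series converging absolutely. -/
theorem statement12 (q : ℝ) (hq : q ∈ Set.Ioo (0 : ℝ) 1) (a : ℝ) (ha : 0 < a) (m : ℕ) :
    Summable (fun n : {n : Fin (m + 1) → ℕ // Antitone n} => lhsTerm12 q a m n.1) ∧
    Summable (fun j : ℕ => q ^ (((m : ℝ) + a) * j) / (1 - q ^ (j + m + 1))) ∧
    ∑' n : {n : Fin (m + 1) → ℕ // Antitone n}, lhsTerm12 q a m n.1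
      = 1 / (qPR q q m * qPR q (q ^ a) m) *
          ∑' j : ℕ, q ^ (((m : ℝ) + a) * j) / (1 - q ^ (j + m + 1)) := by
  obtain ⟨hq0, hq1⟩ := hq
  have hpow : ∀ j : ℕ, q ^ (((m : ℝ) + a) * j) = (q ^ m * q ^ a) ^ j := fun j => by
    rw [Real.rpow_mul hq0.le, Real.rpow_add hq0, Real.rpow_natCast, Real.rpow_natCast]
  have hLHS := hasSum_lhsTerm12 hq0 hq1 ha m
  simp only [hpow]
  exact ⟨hLHS.summable, summable_pow_div_one_sub_pow hq0.le hq1 (by positivity)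
    (pow_mul_lt_one hq0.le hq1.le (Real.rpow_lt_one hq0.le hq1 ha) m) m, hLHS.tsum_eq⟩
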